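/- Contracting a directed cycle in a minimal strongly connected digraph yields a minimal strongly connected digraph. -/

import Mathlib

/-- Reachability in a digraph given by its arc set `A`. -/
def Reach {α : Type*} (A : Finset (α × α)) (u v : α) : Prop :=
  Relation.ReflTransGen (fun a b => (a, b) ∈ A) u v

/-- A digraph with vertex set `V` and arc set `A` is strongly connected if
every vertex reaches every other vertex by a directed path. -/
def StrongConn {α : Type*} (V : Finset α) (A : Finset (α × α)) : Prop :=
  ∀ u ∈ V, ∀ v ∈ V, Reach A u v

/-- Minimal strongly connected: strongly connected and removing any arc
destroys strong connectivity. -/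
def MSC {α : Type*} [DecidableEq α] (V : Finset α) (A : Finset (α × α)) : Prop :=
  StrongConn V A ∧ ∀ a ∈ A, ¬ StrongConn V (A.erase a)

/-- `l` is a directed (simple) path from `u` to `v` in the digraph with arc set `A`. -/
def IsPath {α : Type*} (A : Finset (α × α)) (u v : α) (l : List α) : Prop :=
  l.Chain' (fun a b => (a, b) ∈ A) ∧ l.head? = some u ∧ l.getLast? = some v ∧ l.Nodup

/-- `(u,v)` is a transitive arc: it is an arc and there is a directed path from
`u` to `v` distinct from the single arc `(u,v)`. -/
def TransArc {α : Type*} (A : Finset (α × α)) (u v : α) : Prop :=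
  (u, v) ∈ A ∧ ∃ l, IsPath A u v l ∧ l ≠ [u, v]

/-- `l` (a list of distinct vertices, of length ≥ 2) is a directed cycle:
consecutive vertices are joined by arcs, and there is an arc from the last
vertex back to the first. -/
def IsCycle {α : Type*} (A : Finset (α × α)) (l : List α) : Prop :=
  ∃ h : l ≠ [], l.Nodup ∧ 2 ≤ l.length ∧
    List.Chain (fun a b => (a, b) ∈ A) (l.getLast h) l

/-- Well-formedness: nonempty vertex set, arcs join vertices of `V`, no loops. -/
def GoodDigraph {α : Type*} (V : Finset α) (A : Finset (α × α)) : Prop :=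
  V.Nonempty ∧ ∀ a ∈ A, a.1 ∈ V ∧ a.2 ∈ V ∧ a.1 ≠ a.2

/-- Outdegree of a vertex. -/
def outdeg {α : Type*} [DecidableEq α] (A : Finset (α × α)) (v : α) : ℕ :=
  (A.filter (fun a => a.1 = v)).card

/-- Indegree of a vertex. -/
def indeg {α : Type*} [DecidableEq α] (A : Finset (α × α)) (v : α) : ℕ :=
  (A.filter (fun a => a.2 = v)).card

/-- A linear vertex has indegree and outdegree equal to 1. -/
def LinearVertex {α : Type*} [DecidableEq α] (A : Finset (α × α)) (v : α) : Prop :=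
  indeg A v = 1 ∧ outdeg A v = 1

/-- The digraph is a directed `n`-cycle: its vertices can be listed
`v₁, …, vₙ` so that the arcs are exactly `(v₁,v₂), …, (vₙ,v₁)`. -/
def IsCycleDigraph {α : Type*} [DecidableEq α] (V : Finset α) (A : Finset (α × α)) : Prop :=
  ∃ l : List α, l.Nodup ∧ 2 ≤ l.length ∧ l.toFinset = V ∧ A = (l.zip (l.rotate 1)).toFinset

/-- A directed tree: every arc is accompanied by its reverse, and the
underlying undirected graph (on the vertex set `V`) is a tree. -/
def IsDirTree {α : Type*} [DecidableEq α] (V : Finset α) (A : Finset (α × α)) : Prop :=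
  (∀ u v : α, (u, v) ∈ A → (v, u) ∈ A) ∧
  (SimpleGraph.fromRel (fun a b : {x // x ∈ V} => ((a : α), (b : α)) ∈ A)).IsTree

/-- `(V', A')` is the (internal or external) expansion of `(V, A)` by the new
vertex `v`.  Internal: an arc `(u,w)` is replaced by `(u,v)` and `(v,w)`.
External: the arcs `(u,v)` and `(v,w)` are added for vertices `u, w ∈ V`. -/
def IsExpansionBy {α : Type*} [DecidableEq α] (v : α) (V : Finset α) (A : Finset (α × α))
    (V' : Finset α) (A' : Finset (α × α)) : Prop :=
  v ∉ V ∧ V' = insert v V ∧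
    ((∃ u w, (u, w) ∈ A ∧ A' = insert (u, v) (insert (v, w) (A.erase (u, w)))) ∨
     (∃ u ∈ V, ∃ w ∈ V, A' = insert (u, v) (insert (v, w) A)))


/-! Contracting `c` to `x` is the quotient of the digraph by `contractMap c x`, whose only
nontrivial fibre is `c`. Strong connectivity passes to every quotient. For minimality, an arc
`a` of the contracted digraph is the image of an arc `e` that does not lie on `c`, so the cycle
survives in `A \ {e}` and every fibre stays strongly connected there. A walk in the quotient
avoiding `a` then lifts to a walk in `A` avoiding `e`, the fibres bridging consecutive lifted
arcs; so if deleting `a` kept the quotient strongly connected, deleting `e` would keep `A`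
strongly connected. -/

section

variable {α : Type*}

theorem List.IsChain.reflTransGen_of_mem_of_cons_getLast {r : α → α → Prop} {l : List α}
    (hne : l ≠ []) (hl : IsChain r (l.getLast hne :: l)) {p q : α} (hp : p ∈ l) (hq : q ∈ l) :
    Relation.ReflTransGen r p q := by
  have to_last : ∀ i ∈ l.getLast hne :: l, Relation.ReflTransGen r i (l.getLast hne) :=
    hl.backwards_induction _ _ (fun _ _ hxy hy => hy.head hxy)
      (fun _ => by rw [List.getLast_cons hne])
  have from_last : ∀ i ∈ l.getLast hne :: l, Relation.ReflTransGen r (l.getLast hne) i :=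
    hl.induction _ _ (fun _ _ hxy hx => hx.tail hxy) (fun _ => Relation.ReflTransGen.refl)
  exact (to_last p (List.mem_cons_of_mem _ hp)).trans (from_last q (List.mem_cons_of_mem _ hq))

theorem Reach.mono {A B : Finset (α × α)} (hAB : A ⊆ B) {u v : α} (h : Reach A u v) :
    Reach B u v :=
  Relation.ReflTransGen.mono (fun _ _ hab => hAB hab) _ _ h

theorem IsCycle.reach {A B : Finset (α × α)} {c : List α} (hc : IsCycle A c)
    (hAB : ∀ a b, (a, b) ∈ A → a ∈ c → b ∈ c → (a, b) ∈ B) {p q : α} (hp : p ∈ c) (hq : q ∈ c) :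
    Reach B p q := by
  obtain ⟨hne, -, -, hchain⟩ := hc
  have hlast : c.getLast hne ∈ c := List.getLast_mem hne
  refine List.IsChain.reflTransGen_of_mem_of_cons_getLast hne ?_ hp hq
  refine hchain.imp_of_mem_imp fun a b ha hb hab => hAB a b hab ?_ ?_
  · exact List.mem_of_mem_cons_of_mem ha hlast
  · exact List.mem_of_mem_cons_of_mem hb hlast

section Quotient

variable [DecidableEq α]

def quotArcs (f : α → α) (A : Finset (α × α)) : Finset (α × α) :=
  (A.image fun a => (f a.1, f a.2)).filter fun a => a.1 ≠ a.2

variable {f : α → α} {A : Finset (α × α)}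

theorem Reach.map {u v : α} (h : Reach A u v) : Reach (quotArcs f A) (f u) (f v) := by
  refine Relation.ReflTransGen.lift' f (fun a b hab => ?_) _ _ h
  show Reach (quotArcs f A) (f a) (f b)
  by_cases hfab : f a = f b
  · rw [hfab]
    exact Relation.ReflTransGen.refl
  · exact .single (Finset.mem_filter.mpr ⟨Finset.mem_image_of_mem _ hab, hfab⟩)

theorem StrongConn.map {V : Finset α} (h : StrongConn V A) :
    StrongConn (V.image f) (quotArcs f A) := by
  simp only [StrongConn, Finset.forall_mem_image]
  exact fun u hu v hv => (h u hu v hv).map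

theorem Reach.of_quotArcs (hfib : ∀ p q, f p = f q → Reach A p q) {u v : α}
    (h : Reach (quotArcs f A) (f u) (f v)) : Reach A u v := by
  suffices ∀ w, Reach (quotArcs f A) (f u) w → ∀ v, f v = w → Reach A u v from this _ h v rfl
  intro w hw
  induction hw with
  | refl => exact fun v hv => hfib u v hv.symm
  | tail _ hbd ih =>
    intro v hv
    obtain ⟨⟨s, t⟩, hst, hfst⟩ := Finset.mem_image.mp (Finset.mem_filter.mp hbd).1
    obtain ⟨rfl, rfl⟩ := Prod.mk.inj hfst
    exact ((ih s rfl).tail hst).trans (hfib t v hv.symm)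

theorem quotArcs_erase_subset (e : α × α) :
    (quotArcs f A).erase (f e.1, f e.2) ⊆ quotArcs f (A.erase e) := by
  intro b hb
  obtain ⟨hbe, hbA⟩ := Finset.mem_erase.mp hb
  obtain ⟨hb, hbne⟩ := Finset.mem_filter.mp hbA
  obtain ⟨a, ha, rfl⟩ := Finset.mem_image.mp hb
  refine Finset.mem_filter.mpr ⟨Finset.mem_image_of_mem _ (Finset.mem_erase.mpr ⟨?_, ha⟩), hbne⟩
  rintro rfl
  exact hbe rfl

theorem MSC.quotient {V : Finset α} (h : MSC V A)
    (hfib : ∀ e ∈ A, f e.1 ≠ f e.2 → ∀ p q, f p = f q → Reach (A.erase e) p q) :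
    MSC (V.image f) (quotArcs f A) := by
  refine ⟨h.1.map, fun a ha hsc => ?_⟩
  obtain ⟨ha, hne⟩ := Finset.mem_filter.mp ha
  obtain ⟨e, he, rfl⟩ := Finset.mem_image.mp ha
  refine h.2 e he fun u hu v hv => Reach.of_quotArcs (hfib e he hne) ?_
  exact (hsc (f u) (Finset.mem_image_of_mem f hu) (f v) (Finset.mem_image_of_mem f hv)).mono
    (quotArcs_erase_subset e)

end Quotient

section Contraction

variable [DecidableEq α] (c : List α) (x : α)

def contractMap (a : α) : α := if a ∈ c then x else a

variable {c x}

theorem image_contractMap {V : Finset α} (hcV : c.toFinset ⊆ V) (hx : x ∈ c) :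
    V.image (contractMap c x) = (V \ c.toFinset) ∪ {x} := by
  ext y
  simp only [Finset.mem_image, Finset.mem_union, Finset.mem_sdiff, List.mem_toFinset,
    Finset.mem_singleton]
  constructor
  · rintro ⟨a, ha, rfl⟩
    by_cases hac : a ∈ c <;> simp [contractMap, hac, ha]
  · rintro (⟨hy, hyc⟩ | hyx)
    · exact ⟨y, hy, if_neg hyc⟩
    · exact ⟨x, hcV (List.mem_toFinset.mpr hx), by rw [hyx]; exact if_pos hx⟩

theorem reach_erase_of_contractMap_eq {A : Finset (α × α)} (hc : IsCycle A c) (hx : x ∈ c)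
    {e : α × α} (he : contractMap c x e.1 ≠ contractMap c x e.2) {p q : α}
    (hpq : contractMap c x p = contractMap c x q) : Reach (A.erase e) p q := by
  unfold contractMap at hpq he
  by_cases hp : p ∈ c <;> by_cases hq : q ∈ c <;> simp only [hp, hq, if_true, if_false] at hpq
  · refine hc.reach (fun a b hab ha hb => Finset.mem_erase.mpr ⟨?_, hab⟩) hp hq
    rintro rfl
    simp [ha, hb] at he
  · exact absurd (hpq ▸ hx) hq
  · exact absurd (hpq ▸ hx) hp
  · exact hpq ▸ Relation.ReflTransGen.refl

end Contraction

end

theorem stmt_2_general {α : Type*} [DecidableEq α] (V : Finset α) (A : Finset (α × α))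
    (h : MSC V A)
    (c : List α) (hc : IsCycle A c) (hcV : c.toFinset ⊆ V) (x : α) (hx : x ∈ c) :
    MSC ((V \ c.toFinset) ∪ {x})
      ((A.image (fun a => (if a.1 ∈ c then x else a.1, if a.2 ∈ c then x else a.2))).filter
        (fun a => a.1 ≠ a.2)) := by
  rw [← image_contractMap hcV hx]
  show MSC _ (quotArcs (contractMap c x) A)
  exact h.quotient fun e _ he p q => reach_erase_of_contractMap_eq hc hx he

/-- contracting a directed cycle `c` of an MSC digraph to the
vertex `x ∈ c` (removing the arcs of the cycle, redirecting the remaining arcs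
to `x`, and deleting duplicates and loops) yields an MSC digraph. -/
theorem stmt_2 {α : Type*} [DecidableEq α] (V : Finset α) (A : Finset (α × α))
    (hg : GoodDigraph V A) (h : MSC V A)
    (c : List α) (hc : IsCycle A c) (hcV : c.toFinset ⊆ V) (x : α) (hx : x ∈ c) :
    MSC ((V \ c.toFinset) ∪ {x})
      ((A.image (fun a => (if a.1 ∈ c then x else a.1, if a.2 ∈ c then x else a.2))).filter
        (fun a => a.1 ≠ a.2)) :=
  stmt_2_general V A h c hc hcV x hx
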